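/- Let (Ω, ℱ, P) be a probability space, let N ≥ 1, let A₁, …, A_N be events with p_min := min_{1≤k≤N} P(A_k) > 0, and let L ≥ 0 be an integer. Let α⋆ ≥ 0 and suppose that for every k with 1 ≤ k and k + L + 1 ≤ N, every event C in σ(A₁, …, A_k), and every event B in σ(A_{k+L+1}, …, A_N), one has |P(C ∩ B) − P(C)·P(B)| ≤ α⋆. Then P(⋃_{k=1}^N A_k) ≥ 1 − exp(−S_N/(L+1)) − α⋆/(1 − exp(−p_min)), where S_N := ∑_{k=1}^N P(A_k). -/

import Mathlib

/-!
Choose the residue class `T` of indices mod `L + 1` of largest mass, so that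
`∑_{k ∈ T} P(A k) ≥ S_N / (L + 1)` and distinct indices of `T` are at least `L + 1` apart.
Adding the events of `T` in increasing order, the mixing bound with the past gives
`P(⋂_{k ∈ T} (A k)ᶜ) ≤ P(⋂_{k ∈ T, k < a} (A k)ᶜ) · P((A a)ᶜ) + α⋆` for the last index `a`,
so by induction `P(⋂_T (A k)ᶜ) ≤ ∏_T (1 - P(A k)) + α⋆ ∑_{t < #T} rᵗ` with
`r = exp(-p_min) ≥ 1 - P(A k)`. The product is at most `exp(-∑_T P(A k))` and the geometric
sum at most `1 / (1 - r)`.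
-/

open MeasureTheory Finset

theorem Real.prod_one_sub_le_exp_neg_sum {ι : Type*} (s : Finset ι) (p : ι → ℝ)
    (hp : ∀ i ∈ s, p i ≤ 1) : ∏ i ∈ s, (1 - p i) ≤ Real.exp (-∑ i ∈ s, p i) := by
  rw [← sum_neg_distrib, Real.exp_sum]
  exact prod_le_prod (fun i hi => sub_nonneg.2 (hp i hi)) fun i _ => Real.one_sub_le_exp_neg _

theorem exists_le_sum_filter_mod_eq {m : ℕ} (hm : 0 < m) (s : Finset ℕ) (w : ℕ → ℝ) :
    ∃ j ∈ range m, (∑ k ∈ s, w k) / m ≤ ∑ k ∈ s with k % m = j, w k := by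
  refine exists_le_sum_fiber_of_maps_to_of_nsmul_le_sum
    (fun k _ => mem_range.2 (Nat.mod_lt k hm)) (nonempty_range_iff.2 hm.ne') ?_
  rw [card_range, nsmul_eq_mul, mul_div_cancel₀ _ (Nat.cast_ne_zero.2 hm.ne')]

section

variable {Ω : Type*} [MeasurableSpace Ω]

def AlphaMixingAtLag (P : Measure Ω) (A : ℕ → Set Ω) (N g : ℕ) (α : ℝ) : Prop :=
  ∀ k, 1 ≤ k → k + g ≤ N →
    ∀ C : Set Ω, MeasurableSet[MeasurableSpace.generateFrom (A '' Set.Icc 1 k)] C →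
    ∀ B : Set Ω, MeasurableSet[MeasurableSpace.generateFrom (A '' Set.Icc (k + g) N)] B →
      |(P (C ∩ B)).toReal - (P C).toReal * (P B).toReal| ≤ α

variable {P : Measure Ω} [IsProbabilityMeasure P]

theorem measure_biInter_le_prod_add_geom_sum {ι : Type*} [LinearOrder ι] (E : ι → Set Ω)
    {α r : ℝ} (hα : 0 ≤ α) (T : Finset ι)
    (hr : ∀ a ∈ T, (P (E a)).toReal ≤ r)
    (hmix : ∀ a ∈ T, (P ((⋂ k ∈ T.filter (· < a), E k) ∩ E a)).toReal ≤
      (P (⋂ k ∈ T.filter (· < a), E k)).toReal * (P (E a)).toReal + α) :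
    (P (⋂ k ∈ T, E k)).toReal ≤ ∏ k ∈ T, (P (E k)).toReal + α * ∑ t ∈ range #T, r ^ t := by
  induction T using Finset.induction_on_max with
  | empty => simp
  | insert a s hlt ih =>
    have has : a ∉ s := fun h => lt_irrefl a (hlt a h)
    have hfilter_a : (insert a s).filter (· < a) = s := by
      rw [filter_insert, if_neg (lt_irrefl a), filter_true_of_mem hlt]
    have hfilter_b : ∀ b ∈ s, (insert a s).filter (· < b) = s.filter (· < b) := fun b hb => by
      rw [filter_insert, if_neg (hlt b hb).not_gt]
    have ihs := ih (fun b hb => hr b (mem_insert_of_mem hb)) fun b hb => by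
      simpa only [hfilter_b b hb] using hmix b (mem_insert_of_mem hb)
    have hstep := hmix a (mem_insert_self a s)
    rw [hfilter_a] at hstep
    have hEa : (P (E a)).toReal ≤ r := hr a (mem_insert_self a s)
    have hEa0 : 0 ≤ (P (E a)).toReal := ENNReal.toReal_nonneg
    have hgeom : 0 ≤ α * ∑ t ∈ range #s, r ^ t :=
      mul_nonneg hα (sum_nonneg fun t _ => pow_nonneg (hEa0.trans hEa) t)
    rw [set_biInter_insert, Set.inter_comm, prod_insert has, card_insert_of_notMem has,
      geom_sum_succ]
    nlinarith [mul_le_mul_of_nonneg_right ihs hEa0, mul_le_mul_of_nonneg_left hEa hgeom]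

theorem measureReal_compl_le_exp_neg {s : Set Ω} (hs : MeasurableSet s) {c : ℝ}
    (hc : c ≤ (P s).toReal) : (P sᶜ).toReal ≤ Real.exp (-c) :=
  calc (P sᶜ).toReal = 1 - (P s).toReal := probReal_compl_eq_one_sub hs
    _ ≤ Real.exp (-(P s).toReal) := Real.one_sub_le_exp_neg _
    _ ≤ Real.exp (-c) := Real.exp_le_exp.2 (neg_le_neg hc)

theorem AlphaMixingAtLag.measure_inter_compl_le {A : ℕ → Set Ω} {N g : ℕ} {α : ℝ}
    (hmix : AlphaMixingAtLag P A N g α) (hα : 0 ≤ α) {T : Finset ℕ} (hT : T ⊆ Icc 1 N)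
    (hsep : ∀ a ∈ T, ∀ b ∈ T, a < b → a + g ≤ b) {a : ℕ} (ha : a ∈ T) :
    (P ((⋂ k ∈ T.filter (· < a), (A k)ᶜ) ∩ (A a)ᶜ)).toReal ≤
      (P (⋂ k ∈ T.filter (· < a), (A k)ᶜ)).toReal * (P (A a)ᶜ).toReal + α := by
  rcases (T.filter (· < a)).eq_empty_or_nonempty with hempty | ⟨b, hb⟩
  · simp [hempty, hα]
  obtain ⟨hbT, hba⟩ := mem_filter.1 hb
  have hb1 := (mem_Icc.1 (hT hbT)).1
  have haN := (mem_Icc.1 (hT ha)).2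
  have hgap := hsep b hbT a ha hba
  -- the past `C` lives on indices `≤ a - g`, the future `(A a)ᶜ` on index `a`
  have hC : MeasurableSet[MeasurableSpace.generateFrom (A '' Set.Icc 1 (a - g))]
      (⋂ k ∈ T.filter (· < a), (A k)ᶜ) := by
    refine MeasurableSet.biInter (T.filter (· < a)).countable_toSet fun k hk => ?_
    obtain ⟨hkT, hka⟩ := mem_filter.1 hk
    have := hsep k hkT a ha hka
    exact (MeasurableSpace.measurableSet_generateFrom
      (Set.mem_image_of_mem A (Set.mem_Icc.2 ⟨(mem_Icc.1 (hT hkT)).1, by omega⟩))).compl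
  have hB : MeasurableSet[MeasurableSpace.generateFrom (A '' Set.Icc (a - g + g) N)] (A a)ᶜ :=
    (MeasurableSpace.measurableSet_generateFrom
      (Set.mem_image_of_mem A (Set.mem_Icc.2 ⟨by omega, haN⟩))).compl
  have := (abs_le.1 (hmix (a - g) (by omega) (by omega) _ hC _ hB)).2
  linarith

theorem AlphaMixingAtLag.one_sub_le_measure_biUnion {A : ℕ → Set Ω} {N g : ℕ} {α : ℝ}
    (hmix : AlphaMixingAtLag P A N g α) (hα : 0 ≤ α) {T : Finset ℕ} (hT : T ⊆ Icc 1 N)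
    (hA : ∀ k ∈ T, MeasurableSet (A k)) (hsep : ∀ a ∈ T, ∀ b ∈ T, a < b → a + g ≤ b)
    {c : ℝ} (hc : 0 < c) (hcT : ∀ k ∈ T, c ≤ (P (A k)).toReal) :
    1 - Real.exp (-∑ k ∈ T, (P (A k)).toReal) - α / (1 - Real.exp (-c)) ≤
      (P (⋃ k ∈ T, A k)).toReal := by
  have hbound := measure_biInter_le_prod_add_geom_sum (fun k => (A k)ᶜ) hα T
    (fun a ha => measureReal_compl_le_exp_neg (hA a ha) (hcT a ha))
    (fun a ha => hmix.measure_inter_compl_le hα hT hsep ha)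
  have hcompl : (P (⋂ k ∈ T, (A k)ᶜ)).toReal = 1 - (P (⋃ k ∈ T, A k)).toReal := by
    rw [← Set.compl_iUnion₂]
    exact probReal_compl_eq_one_sub (T.measurableSet_biUnion hA)
  have hprod : ∏ k ∈ T, (P (A k)ᶜ).toReal ≤ Real.exp (-∑ k ∈ T, (P (A k)).toReal) :=
    (prod_congr rfl fun k hk => probReal_compl_eq_one_sub (hA k hk)).trans_le
      (Real.prod_one_sub_le_exp_neg_sum _ _ fun k _ => measureReal_le_one)
  have hgeom : α * ∑ t ∈ range #T, Real.exp (-c) ^ t ≤ α / (1 - Real.exp (-c)) := by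
    have := geom_sum_Ico_le_of_lt_one (m := 0) (n := #T) (Real.exp_nonneg (-c))
      (Real.exp_lt_one_iff.2 (neg_neg_of_pos hc))
    rw [← range_eq_Ico, pow_zero] at this
    simpa only [mul_one_div] using mul_le_mul_of_nonneg_left this hα
  linarith

end

theorem alpha_mixing_union_bound_lower_mass_general
    {Ω : Type*} [MeasurableSpace Ω] (P : Measure Ω) [IsProbabilityMeasure P]
    (N : ℕ)
    (A : ℕ → Set Ω) (hA : ∀ k ∈ Finset.Icc 1 N, MeasurableSet (A k))
    (pmin : ℝ) (hpmin : pmin = sInf ((fun k => (P (A k)).toReal) '' Set.Icc 1 N))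
    (hpmin0 : 0 < pmin)
    (L : ℕ) (αs : ℝ) (hαs : 0 ≤ αs)
    (hmix : ∀ k, 1 ≤ k → k + L + 1 ≤ N →
      ∀ C : Set Ω,
        MeasurableSet[MeasurableSpace.generateFrom (A '' Set.Icc 1 k)] C →
      ∀ B : Set Ω,
        MeasurableSet[MeasurableSpace.generateFrom (A '' Set.Icc (k + L + 1) N)] B →
          |(P (C ∩ B)).toReal - (P C).toReal * (P B).toReal| ≤ αs) :
    1 - Real.exp (-(∑ k ∈ Finset.Icc 1 N, (P (A k)).toReal) / ((L : ℝ) + 1)) -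
        αs / (1 - Real.exp (-pmin)) ≤
      (P (⋃ k ∈ Finset.Icc 1 N, A k)).toReal := by
  have hmix' : AlphaMixingAtLag P A N (L + 1) αs := hmix
  obtain ⟨j, -, hj⟩ :=
    exists_le_sum_filter_mod_eq (Nat.succ_pos L) (Icc 1 N) fun k => (P (A k)).toReal
  set T := {k ∈ Icc 1 N | k % (L + 1) = j}
  have hT : T ⊆ Icc 1 N := filter_subset _ _
  have hsep : ∀ a ∈ T, ∀ b ∈ T, a < b → a + (L + 1) ≤ b := fun a ha b hb hab =>
    Nat.ModEq.add_le_of_lt ((mem_filter.1 ha).2.trans (mem_filter.1 hb).2.symm) hab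
  have hpminT : ∀ k ∈ T, pmin ≤ (P (A k)).toReal := fun k hk =>
    hpmin ▸ csInf_le ⟨0, by rintro _ ⟨_, _, rfl⟩; positivity⟩
      ⟨k, by simpa using mem_Icc.1 (hT hk), rfl⟩
  have hbound := hmix'.one_sub_le_measure_biUnion hαs hT (fun k hk => hA k (hT hk)) hsep
    hpmin0 hpminT
  have hexp : Real.exp (-∑ k ∈ T, (P (A k)).toReal) ≤
      Real.exp (-(∑ k ∈ Icc 1 N, (P (A k)).toReal) / ((L : ℝ) + 1)) := by
    rw [neg_div, Real.exp_le_exp, neg_le_neg_iff]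
    exact_mod_cast hj
  have hmono : (P (⋃ k ∈ T, A k)).toReal ≤ (P (⋃ k ∈ Icc 1 N, A k)).toReal :=
    measureReal_mono (Set.biUnion_subset_biUnion_left (by exact_mod_cast hT))
      (measure_ne_top P _)
  linarith

/-- Corollary (sharpened α-mixing bound under a lower mass): with
`pmin = min_{1≤k≤N} P(A k) > 0`,
`P(⋃ₖ A k) ≥ 1 − exp(−S_N/(L+1)) − αs/(1 − exp(−pmin))`. -/
theorem alpha_mixing_union_bound_lower_mass
    {Ω : Type*} [MeasurableSpace Ω] (P : Measure Ω) [IsProbabilityMeasure P]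
    (N : ℕ) (hN : 1 ≤ N)
    (A : ℕ → Set Ω) (hA : ∀ k ∈ Finset.Icc 1 N, MeasurableSet (A k))
    (pmin : ℝ) (hpmin : pmin = sInf ((fun k => (P (A k)).toReal) '' Set.Icc 1 N))
    (hpmin0 : 0 < pmin)
    (L : ℕ) (αs : ℝ) (hαs : 0 ≤ αs)
    (hmix : ∀ k, 1 ≤ k → k + L + 1 ≤ N →
      ∀ C : Set Ω,
        MeasurableSet[MeasurableSpace.generateFrom (A '' Set.Icc 1 k)] C →
      ∀ B : Set Ω,
        MeasurableSet[MeasurableSpace.generateFrom (A '' Set.Icc (k + L + 1) N)] B →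
          |(P (C ∩ B)).toReal - (P C).toReal * (P B).toReal| ≤ αs) :
    1 - Real.exp (-(∑ k ∈ Finset.Icc 1 N, (P (A k)).toReal) / ((L : ℝ) + 1)) -
        αs / (1 - Real.exp (-pmin)) ≤
      (P (⋃ k ∈ Finset.Icc 1 N, A k)).toReal :=
  alpha_mixing_union_bound_lower_mass_general P N A hA pmin hpmin hpmin0 L αs hαs hmix
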